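/- arXiv:1407.4235 — 3 statements merged into one kernel-verified Lean document; each statement's English description precedes it below -/
import Mathlib

section
/- Let H be a connected finite simple graph with two vertices s and t at distance d ≥ 2 such that every vertex of H lies in some layer L_0, L_1, …, L_d. Let (G, L) be the constructed list-coloring instance, let P_0 and P_r be S-paths in H, and let f_0 and f_r be proper L-colorings of G such that, for each 1 ≤ i ≤ d−1, f_0(u_i) is the unique vertex of P_0 in layer L_i and f_r(u_i) is the unique vertex of P_r in layer L_i. Then there exists a sequence of S-paths P_0 = Q_0, Q_1, …, Q_ℓ = P_r in which consecutive S-paths are adjacent if and only if f_0 and f_r are reconfigurable in (G, L). -/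
/-- The layer `L_i`: vertices at distance `i` from `s` and `d - i` from `t`. -/
def layerSet {V : Type*} (H : SimpleGraph V) (s t : V) (d i : ℕ) : Set V :=
  {v | H.dist s v = i ∧ H.dist t v = d - i}

/-- The vertices of the constructed graph `G`: a layer vertex `u_i` for each
`1 ≤ i ≤ d - 1`, and a forbidden vertex `w_{a,b}` for each `1 ≤ i ≤ d - 2` and each pair
`a ∈ L_i`, `b ∈ L_{i+1}` with `ab ∉ E(H)`. -/
abbrev CVert {V : Type*} (H : SimpleGraph V) (s t : V) (d : ℕ) :=
  {i : ℕ // 1 ≤ i ∧ i ≤ d - 1} ⊕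
    {x : ℕ × V × V // 1 ≤ x.1 ∧ x.1 ≤ d - 2 ∧
      x.2.1 ∈ layerSet H s t d x.1 ∧ x.2.2 ∈ layerSet H s t d (x.1 + 1) ∧
      ¬ H.Adj x.2.1 x.2.2}

/-- Adjacency of the constructed graph: the forbidden vertex `w_{a,b}` for layers
`i, i+1` is joined exactly to the layer vertices `u_i` and `u_{i+1}`. -/
def CAdj {V : Type*} (H : SimpleGraph V) (s t : V) (d : ℕ) :
    CVert H s t d → CVert H s t d → Prop
  | Sum.inl u, Sum.inr w => u.1 = w.1.1 ∨ u.1 = w.1.1 + 1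
  | Sum.inr w, Sum.inl u => u.1 = w.1.1 ∨ u.1 = w.1.1 + 1
  | _, _ => False

/-- The constructed graph `G`. -/
def CGraph {V : Type*} (H : SimpleGraph V) (s t : V) (d : ℕ) :
    SimpleGraph (CVert H s t d) where
  Adj := CAdj H s t d
  symm := by constructor; rintro (u | w) (u' | w') h <;> simp [CAdj] at h ⊢ <;> exact h
  loopless := by constructor; rintro (u | w) h <;> simp [CAdj] at h

/-- The list assignment of the constructed instance: the layer vertex `u_i` has list
`L_i`, and the forbidden vertex `w_{a,b}` has list `{a, b}` (colors are vertices of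
`H`). -/
def CList {V : Type*} (H : SimpleGraph V) (s t : V) (d : ℕ) :
    CVert H s t d → Set V
  | Sum.inl u => layerSet H s t d u.1
  | Sum.inr w => {w.1.2.1, w.1.2.2}

/-- A proper `L`-coloring of `G`: each vertex gets a color from its list, and adjacent
vertices get different colors. -/
def IsProperListColoring {W β : Type*} (G : SimpleGraph W) (L : W → Set β)
    (f : W → β) : Prop :=
  (∀ v, f v ∈ L v) ∧ ∀ ⦃u w⦄, G.Adj u w → f u ≠ f w

/-- One recoloring step between proper list colorings: both are proper and they differ
on exactly one vertex. -/
def RecolorStep {W β : Type*} (G : SimpleGraph W) (L : W → Set β)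
    (f g : W → β) : Prop :=
  IsProperListColoring G L f ∧ IsProperListColoring G L g ∧ ∃! w, f w ≠ g w

/-- `f` and `g` are reconfigurable in `(G, L)` if there is a recoloring sequence
(a sequence of proper list colorings, consecutive ones differing on one vertex)
from `f` to `g`. -/
def Reconfigurable {W β : Type*} (G : SimpleGraph W) (L : W → Set β)
    (f g : W → β) : Prop :=
  Relation.ReflTransGen (RecolorStep G L) f g

/-- An S-path: a shortest path between `s` and `t`, i.e. a path with exactly
`dist s t` edges. -/
def IsSPath {V : Type*} (H : SimpleGraph V) {s t : V} (p : H.Walk s t) : Prop :=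
  p.IsPath ∧ p.length = H.dist s t

/-- Two S-paths are adjacent: each contains exactly one vertex not on the other. -/
def SPathAdjacent {V : Type*} [DecidableEq V] {H : SimpleGraph V} {s t : V}
    (p q : H.Walk s t) : Prop :=
  (p.support.toFinset \ q.support.toFinset).card = 1 ∧
    (q.support.toFinset \ p.support.toFinset).card = 1

/-!
A proper coloring of `(G, L)` spells an S-path through its layer vertices: `f(u_i) ∈ L_i`, and if
`f(u_i) f(u_{i+1})` were not an edge of `H`, the forbidden vertex `w_{f(u_i), f(u_{i+1})}` would
have no color left. Forbidden vertices only see layer vertices, so two colorings that agree on all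
layer vertices (or on all forbidden vertices) are reconfigurable one vertex at a time. Hence a
recoloring step moves the encoded S-path by at most one vertex. Conversely, to move from an S-path
`p` to an adjacent `q`, first give every forbidden vertex `w_{a,b}` the color `a` unless `p` or `q`
uses `a`, and `b` otherwise; `b` is then safe because no S-path visits `a` and then `b`. After
this the layer vertex whose color changes is free to switch.
-/

open SimpleGraph

theorem Relation.ReflTransGen.exists_of_simulation {α β : Type*} {r : α → α → Prop}
    {r' : β → β → Prop} {R : α → β → Prop}
    (hsim : ∀ a a' b, r a a' → R a b → ∃ b', R a' b' ∧ Relation.ReflTransGen r' b b')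
    {a a' : α} {b : β} (h : Relation.ReflTransGen r a a') (hab : R a b) :
    ∃ b', R a' b' ∧ Relation.ReflTransGen r' b b' := by
  induction h with
  | refl => exact ⟨b, hab, .refl⟩
  | tail _ hstep ih =>
    obtain ⟨b₁, hR₁, hb₁⟩ := ih
    obtain ⟨b₂, hR₂, hb₂⟩ := hsim _ _ _ hstep hR₁
    exact ⟨b₂, hR₂, hb₁.trans hb₂⟩

theorem SimpleGraph.exists_walk_getVert_eq {V : Type*} {G : SimpleGraph V} :
    ∀ (n : ℕ) (c : ℕ → V), (∀ j < n, G.Adj (c j) (c (j + 1))) →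
      ∃ p : G.Walk (c 0) (c n), p.length = n ∧ ∀ j ≤ n, p.getVert j = c j
  | 0, c, _ => ⟨.nil, rfl, fun j hj => by simp [Nat.le_zero.1 hj]⟩
  | n + 1, c, hc => by
    obtain ⟨p, hlen, hp⟩ := exists_walk_getVert_eq n (fun j => c (j + 1))
      fun j hj => hc (j + 1) (by omega)
    refine ⟨.cons (hc 0 n.succ_pos) p, by simp [hlen], fun j hj => ?_⟩
    cases j with
    | zero => rfl
    | succ j => simpa using hp j (by omega)

lemma IsProperListColoring.recolorStep_update {W β : Type*} [DecidableEq W]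
    {G : SimpleGraph W} {L : W → Set β} {f g : W → β} (hf : IsProperListColoring G L f)
    (hg : IsProperListColoring G L g) {a : W} (hfa : f a ≠ g a)
    (hnbr : ∀ ⦃y⦄, G.Adj a y → f y = g y) :
    RecolorStep G L f (Function.update f a (g a)) := by
  set f' := Function.update f a (g a)
  have hnbr' : ∀ ⦃y⦄, G.Adj a y → f' a ≠ f' y := fun y hy => by
    simpa [f', (G.ne_of_adj hy).symm, hnbr hy] using hg.2 hy
  refine ⟨hf, ⟨fun v => ?_, fun x y hxy => ?_⟩, a, by simpa [f'] using hfa, fun w hw => ?_⟩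
  · by_cases hv : v = a
    · subst hv; simpa [f'] using hg.1 v
    · simpa [f', hv] using hf.1 v
  · by_cases hx : x = a
    · exact hx ▸ hnbr' (hx ▸ hxy)
    by_cases hy : y = a
    · exact (hy ▸ hnbr' (hy ▸ hxy.symm)).symm
    simpa [f', hx, hy] using hf.2 hxy
  · by_contra hwa
    simp [f', hwa] at hw

theorem reconfigurable_of_diff_independent {W β : Type*} {G : SimpleGraph W}
    {L : W → Set β} {f g : W → β} (hf : IsProperListColoring G L f)
    (hg : IsProperListColoring G L g) (hfin : {w | f w ≠ g w}.Finite)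
    (hind : ∀ ⦃x y⦄, G.Adj x y → f x = g x ∨ f y = g y) :
    Reconfigurable G L f g := by
  classical
  obtain ⟨D, hD⟩ := hfin.exists_finset_coe
  clear hfin
  induction D using Finset.induction_on generalizing f with
  | empty =>
    have : f = g := funext fun w => by_contra fun hw => by simpa using hD.symm.subset hw
    exact this ▸ .refl
  | insert a D ha ih =>
    have hfa : f a ≠ g a := hD.subset (by simp)
    have hstep := hf.recolorStep_update hg hfa fun y hy => (hind hy).resolve_left hfa
    refine .head hstep (ih hstep.2.1 (fun x y hxy => ?_) ?_)
    · rcases hind hxy with h | h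
      · by_cases hx : x = a <;> simp [hx, h]
      · by_cases hy : y = a <;> simp [hy, h]
    · ext w
      by_cases hw : w = a
      · subst hw; simp [ha]
      · simpa [hw] using Set.ext_iff.1 hD w

section SPaths

variable {V : Type*} {H : SimpleGraph V} {s t : V} {d : ℕ} {p q : H.Walk s t}

lemma ne_of_mem_layerSet {x y : V} {i j : ℕ} (hx : x ∈ layerSet H s t d i)
    (hy : y ∈ layerSet H s t d j) (hij : i ≠ j) : x ≠ y := by
  rintro rfl
  exact hij (hx.1.symm.trans hy.1)

lemma IsSPath.getVert_of_le (hp : IsSPath H p) (hd : H.dist s t = d) {i : ℕ} (hi : d ≤ i) :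
    p.getVert i = t :=
  p.getVert_of_length_le (by rw [hp.2, hd]; exact hi)

lemma IsSPath.getVert_mem_layerSet (hp : IsSPath H p) (hd : H.dist s t = d) {i : ℕ}
    (hi : i ≤ d) : p.getVert i ∈ layerSet H s t d i := by
  have hlen : p.length = d := hp.2.trans hd
  have hs : H.dist s (p.getVert i) ≤ i := by simpa [hlen, hi] using dist_le (p.take i)
  have ht : H.dist (p.getVert i) t ≤ d - i := by simpa [hlen] using dist_le (p.drop i)
  have htri := (p.take i).reachable.dist_triangle_left t
  exact ⟨by omega, by rw [SimpleGraph.dist_comm]; omega⟩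

lemma IsSPath.eq_getVert_of_mem_support (hp : IsSPath H p) (hd : H.dist s t = d) {v : V}
    {i : ℕ} (hv : v ∈ p.support) (hvi : v ∈ layerSet H s t d i) : v = p.getVert i := by
  obtain ⟨j, rfl, hj⟩ := Walk.mem_support_iff_exists_getVert.1 hv
  rw [← hvi.1, (hp.getVert_mem_layerSet hd (hj.trans (hp.2.trans hd).le)).1]

lemma IsSPath.support_sdiff_eq_singleton [DecidableEq V] (hp : IsSPath H p) (hq : IsSPath H q)
    (hd : H.dist s t = d) {i : ℕ} (hne : p.getVert i ≠ q.getVert i)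
    (h : ∀ j ≠ i, p.getVert j = q.getVert j) :
    p.support.toFinset \ q.support.toFinset = {p.getVert i} := by
  have hi : i ≤ d := by
    by_contra! hi
    exact hne ((hp.getVert_of_le hd hi.le).trans (hq.getVert_of_le hd hi.le).symm)
  ext x
  simp only [Finset.mem_sdiff, List.mem_toFinset, Finset.mem_singleton]
  constructor
  · rintro ⟨hxp, hxq⟩
    obtain ⟨j, rfl, -⟩ := Walk.mem_support_iff_exists_getVert.1 hxp
    by_contra hji
    exact hxq (h j (fun hj => hji (hj ▸ rfl)) ▸ q.getVert_mem_support j)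
  · rintro rfl
    exact ⟨p.getVert_mem_support i, fun hq_mem =>
      hne (hq.eq_getVert_of_mem_support hd hq_mem (hp.getVert_mem_layerSet hd hi))⟩

lemma IsSPath.sPathAdjacent_of_getVert_eq_off [DecidableEq V] (hp : IsSPath H p)
    (hq : IsSPath H q) (hd : H.dist s t = d) (hpq : p ≠ q) {i : ℕ}
    (h : ∀ j ≠ i, p.getVert j = q.getVert j) : SPathAdjacent p q := by
  have hne : p.getVert i ≠ q.getVert i := fun hi =>
    hpq (Walk.ext_getVert fun j => if hj : j = i then hj ▸ hi else h j hj)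
  constructor
  · rw [hp.support_sdiff_eq_singleton hq hd hne h, Finset.card_singleton]
  · rw [hq.support_sdiff_eq_singleton hp hd hne.symm fun j hj => (h j hj).symm,
      Finset.card_singleton]

lemma SPathAdjacent.exists_getVert_eq_off [DecidableEq V] (hpq : SPathAdjacent p q)
    (hp : IsSPath H p) (hq : IsSPath H q) (hd : H.dist s t = d) :
    ∃ i, ∀ j ≠ i, p.getVert j = q.getVert j := by
  obtain ⟨x, hx⟩ := Finset.card_eq_one.1 hpq.1
  have hxp : x ∈ p.support := by
    have hx' : x ∈ p.support.toFinset \ q.support.toFinset := hx ▸ Finset.mem_singleton_self x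
    exact List.mem_toFinset.1 (Finset.mem_sdiff.1 hx').1
  obtain ⟨i, rfl, hi⟩ := Walk.mem_support_iff_exists_getVert.1 hxp
  rw [hp.2, hd] at hi
  refine ⟨i, fun j hji => ?_⟩
  by_cases hj : j ≤ d
  · refine hq.eq_getVert_of_mem_support hd ?_ (hp.getVert_mem_layerSet hd hj)
    by_contra hnot
    have hsdiff : p.getVert j ∈ p.support.toFinset \ q.support.toFinset := by
      simp [p.getVert_mem_support, hnot]
    rw [hx, Finset.mem_singleton] at hsdiff
    exact ne_of_mem_layerSet (hp.getVert_mem_layerSet hd hj) (hp.getVert_mem_layerSet hd hi)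
      hji hsdiff
  · rw [hp.getVert_of_le hd (by omega), hq.getVert_of_le hd (by omega)]

def SPathStep [DecidableEq V] (p q : H.Walk s t) : Prop :=
  IsSPath H p ∧ IsSPath H q ∧ SPathAdjacent p q

end SPaths

section Reduction

variable {V : Type*} {H : SimpleGraph V} {s t : V} {d : ℕ}

instance [Finite V] : Finite (CVert H s t d) := by
  have : Finite {i : ℕ // 1 ≤ i ∧ i ≤ d - 1} := inferInstanceAs (Finite (Set.Icc 1 (d - 1)))
  have : Finite {x : ℕ × V × V // 1 ≤ x.1 ∧ x.1 ≤ d - 2 ∧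
      x.2.1 ∈ layerSet H s t d x.1 ∧ x.2.2 ∈ layerSet H s t d (x.1 + 1) ∧
      ¬ H.Adj x.2.1 x.2.2} :=
    ((Set.finite_Iic (d - 2)).prod Set.finite_univ).subset (fun x hx => ⟨hx.2.1, trivial⟩)
      |>.to_subtype
  infer_instance

lemma isProperListColoring_cGraph {f : CVert H s t d → V}
    (hlist : ∀ v, f v ∈ CList H s t d v)
    (hadj : ∀ u w, (u.1 = w.1.1 ∨ u.1 = w.1.1 + 1) → f (.inl u) ≠ f (.inr w)) :
    IsProperListColoring (CGraph H s t d) (CList H s t d) f := by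
  refine ⟨hlist, ?_⟩
  rintro (u | w) (u' | w') h
  · exact h.elim
  · exact hadj u w' h
  · exact (hadj u' w h).symm
  · exact h.elim

theorem reconfigurable_of_eq_on_inl_or_inr [Finite V] {f g : CVert H s t d → V}
    (hf : IsProperListColoring (CGraph H s t d) (CList H s t d) f)
    (hg : IsProperListColoring (CGraph H s t d) (CList H s t d) g)
    (h : (∀ u, f (.inl u) = g (.inl u)) ∨ ∀ w, f (.inr w) = g (.inr w)) :
    Reconfigurable (CGraph H s t d) (CList H s t d) f g := by
  refine reconfigurable_of_diff_independent hf hg (Set.toFinite _) ?_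
  rintro (u | w) (u' | w') hadj
  · exact hadj.elim
  · exact h.imp (· u) (· w')
  · exact h.symm.imp (· w) (· u')
  · exact hadj.elim

-- The sequence `s, f(u_1), …, f(u_{d-1}), t`, continued by `t` beyond index `d`.
def layerSeq (f : CVert H s t d → V) (i : ℕ) : V :=
  if h : 1 ≤ i ∧ i ≤ d - 1 then f (.inl ⟨i, h⟩) else if i = 0 then s else t

lemma layerSeq_zero (f : CVert H s t d → V) : layerSeq f 0 = s := by simp [layerSeq]

lemma layerSeq_inl (f : CVert H s t d → V) (u : {i : ℕ // 1 ≤ i ∧ i ≤ d - 1}) :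
    layerSeq f u.1 = f (.inl u) :=
  dif_pos u.2

lemma layerSeq_of_le (f : CVert H s t d → V) {i : ℕ} (hi : d ≤ i) (hi0 : i ≠ 0) :
    layerSeq f i = t := by
  rw [layerSeq, dif_neg (by omega), if_neg hi0]

lemma layerSeq_mem_layerSet (hd : H.dist s t = d) {f : CVert H s t d → V}
    (hf : ∀ v, f v ∈ CList H s t d v) {i : ℕ} (hi : i ≤ d) :
    layerSeq f i ∈ layerSet H s t d i := by
  by_cases h : 1 ≤ i ∧ i ≤ d - 1
  · exact layerSeq_inl f ⟨i, h⟩ ▸ hf (.inl ⟨i, h⟩)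
  · rcases Nat.eq_zero_or_pos i with rfl | hi0
    · rw [layerSeq_zero]
      exact ⟨dist_self, by rw [SimpleGraph.dist_comm, hd, Nat.sub_zero]⟩
    · rw [layerSeq_of_le f (by omega) hi0.ne', show i = d by omega]
      exact ⟨hd, by rw [dist_self, Nat.sub_self]⟩

lemma IsProperListColoring.adj_layerSeq {f : CVert H s t d → V}
    (hf : IsProperListColoring (CGraph H s t d) (CList H s t d) f) (hd : H.dist s t = d)
    {i : ℕ} (hi : i < d) : H.Adj (layerSeq f i) (layerSeq f (i + 1)) := by
  have ha := layerSeq_mem_layerSet hd hf.1 hi.le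
  have hb := layerSeq_mem_layerSet hd hf.1 hi
  rcases Nat.eq_zero_or_pos i with rfl | hi0
  · rw [layerSeq_zero, ← dist_eq_one_iff_adj]
    exact hb.1
  by_cases hlast : i + 1 = d
  · rw [layerSeq_of_le f hlast.ge (by omega), adj_comm, ← dist_eq_one_iff_adj, ha.2]
    omega
  -- otherwise the forbidden vertex `w_{a,b}` for `a = f(u_i)`, `b = f(u_{i+1})` has no color
  by_contra hab
  have hu : 1 ≤ i ∧ i ≤ d - 1 := ⟨hi0, by omega⟩
  have hu' : 1 ≤ i + 1 ∧ i + 1 ≤ d - 1 := ⟨by omega, by omega⟩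
  let w : {x : ℕ × V × V // 1 ≤ x.1 ∧ x.1 ≤ d - 2 ∧
      x.2.1 ∈ layerSet H s t d x.1 ∧ x.2.2 ∈ layerSet H s t d (x.1 + 1) ∧
      ¬ H.Adj x.2.1 x.2.2} :=
    ⟨(i, layerSeq f i, layerSeq f (i + 1)), hi0, by omega, ha, hb, hab⟩
  rcases hf.1 (.inr w) with hw | hw
  · exact hf.2 (u := .inl ⟨i, hu⟩) (w := .inr w) (Or.inl rfl)
      ((layerSeq_inl f ⟨i, hu⟩).symm.trans hw.symm)
  · exact hf.2 (u := .inl ⟨i + 1, hu'⟩) (w := .inr w) (Or.inr rfl)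
      ((layerSeq_inl f ⟨i + 1, hu'⟩).symm.trans hw.symm)

variable {p q : H.Walk s t}

def Encodes (p : H.Walk s t) (f : CVert H s t d → V) : Prop :=
  ∀ u : {i : ℕ // 1 ≤ i ∧ i ≤ d - 1}, f (.inl u) = p.getVert u.1

lemma Encodes.getVert_eq_layerSeq {f : CVert H s t d → V} (h : Encodes p f)
    (hlen : p.length = d) : p.getVert = layerSeq f := by
  funext j
  by_cases hj : 1 ≤ j ∧ j ≤ d - 1
  · rw [layerSeq_inl f ⟨j, hj⟩, h ⟨j, hj⟩]
  · rcases Nat.eq_zero_or_pos j with rfl | hj0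
    · rw [Walk.getVert_zero, layerSeq_zero]
    · rw [p.getVert_of_length_le (by omega), layerSeq_of_le f (by omega) hj0.ne']

lemma IsSPath.encodes_of_mem_support (hp : IsSPath H p) (hd : H.dist s t = d)
    {f : CVert H s t d → V}
    (h : ∀ u, f (.inl u) ∈ p.support ∧ f (.inl u) ∈ layerSet H s t d u.1) : Encodes p f :=
  fun u => hp.eq_getVert_of_mem_support hd (h u).1 (h u).2

lemma exists_sPath_encodes (hd : H.dist s t = d) (hd0 : d ≠ 0) {f : CVert H s t d → V}
    (hf : IsProperListColoring (CGraph H s t d) (CList H s t d) f) :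
    ∃ q : H.Walk s t, IsSPath H q ∧ Encodes q f := by
  obtain ⟨q, hlen, hq⟩ :=
    exists_walk_getVert_eq d (layerSeq f) fun j hj => hf.adj_layerSeq hd hj
  have hlen' :
      (q.copy (layerSeq_zero f) (layerSeq_of_le f le_rfl hd0)).length = H.dist s t := by
    rw [Walk.length_copy, hlen, hd]
  refine ⟨_, ⟨Walk.isPath_of_length_eq_dist _ hlen', hlen'⟩, fun u => ?_⟩
  rw [Walk.getVert_copy, hq u.1 (by omega), layerSeq_inl]

def avoidingColoring [DecidableEq V] (c c' : ℕ → V) : CVert H s t d → V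
  | .inl u => c u.1
  | .inr w => if w.1.2.1 = c w.1.1 ∨ w.1.2.1 = c' w.1.1 then w.1.2.2 else w.1.2.1

lemma IsSPath.isProperListColoring_avoidingColoring [DecidableEq V] (hp : IsSPath H p)
    (hq : IsSPath H q) (hd : H.dist s t = d) {i : ℕ}
    (h : ∀ j ≠ i, p.getVert j = q.getVert j) :
    IsProperListColoring (CGraph H s t d) (CList H s t d) (avoidingColoring p.getVert q.getVert) := by
  refine isProperListColoring_cGraph ?_ ?_
  · rintro (u | w)
    · exact hp.getVert_mem_layerSet hd (by have := u.2; omega)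
    · simp only [avoidingColoring, CList]
      split_ifs <;> simp
  rintro u ⟨⟨j, a, b⟩, hj1, hj2, ha, hb, hab⟩ hu
  dsimp only at hj1 hj2 ha hb hab hu
  have hpu := hp.getVert_mem_layerSet hd (i := u.1) (by have := u.2; omega)
  have hnext : ∀ r : H.Walk s t, IsSPath H r → r.getVert j = a → r.getVert (j + 1) ≠ b :=
    fun r hr hra hrb => hab (hra ▸ hrb ▸ r.adj_getVert_succ (by rw [hr.2, hd]; omega))
  simp only [avoidingColoring]
  split_ifs with hA
  · rcases hu with hu | hu
    · exact ne_of_mem_layerSet hpu hb (by omega)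
    rw [hu]
    rcases hA with hA | hA
    · exact hnext p hp hA.symm
    by_cases hj : j + 1 = i
    · exact hnext p hp ((h j (by omega)).trans hA.symm)
    · rw [h (j + 1) hj]
      exact hnext q hq hA.symm
  · rcases hu with hu | hu
    · rw [hu]
      exact fun he => hA (.inl he.symm)
    · exact ne_of_mem_layerSet hpu ha (by omega)

theorem SPathStep.exists_reconfigurable [Finite V] [DecidableEq V] (hpq : SPathStep p q)
    (hd : H.dist s t = d) {f : CVert H s t d → V}
    (hf : IsProperListColoring (CGraph H s t d) (CList H s t d) f) (hfp : Encodes p f) :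
    ∃ g, IsProperListColoring (CGraph H s t d) (CList H s t d) g ∧ Encodes q g ∧
      Reconfigurable (CGraph H s t d) (CList H s t d) f g := by
  obtain ⟨hp, hq, hadj⟩ := hpq
  obtain ⟨i, h⟩ := hadj.exists_getVert_eq_off hp hq hd
  have hpq' := hp.isProperListColoring_avoidingColoring hq hd h
  have hqp' := hq.isProperListColoring_avoidingColoring hp hd fun j hj => (h j hj).symm
  refine ⟨_, hqp', fun u => rfl, ?_⟩
  refine (reconfigurable_of_eq_on_inl_or_inr hf hpq' (.inl hfp)).trans
    (reconfigurable_of_eq_on_inl_or_inr hpq' hqp' (.inr fun w => ?_))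
  simp only [avoidingColoring, or_comm]

lemma RecolorStep.exists_layerSeq_eq_off {G : SimpleGraph (CVert H s t d)}
    {L : CVert H s t d → Set V} {f g : CVert H s t d → V} (h : RecolorStep G L f g) :
    ∃ i, ∀ j ≠ i, layerSeq f j = layerSeq g j := by
  obtain ⟨-, -, w, -, hw⟩ := h
  refine ⟨Sum.elim Subtype.val (fun _ => 0) w, fun j hj => ?_⟩
  by_cases hju : 1 ≤ j ∧ j ≤ d - 1
  · rw [layerSeq_inl f ⟨j, hju⟩, layerSeq_inl g ⟨j, hju⟩]
    by_contra hne
    exact hj (by rw [← hw _ hne]; rfl)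
  · simp only [layerSeq, dif_neg hju]

theorem RecolorStep.exists_sPath [DecidableEq V] {f g : CVert H s t d → V}
    (hfg : RecolorStep (CGraph H s t d) (CList H s t d) f g) (hp : IsSPath H p)
    (hd : H.dist s t = d) (hd0 : d ≠ 0) (hfp : Encodes p f) :
    ∃ q, IsSPath H q ∧ Encodes q g ∧ Relation.ReflTransGen SPathStep p q := by
  obtain ⟨q, hq, hqg⟩ := exists_sPath_encodes hd hd0 hfg.2.1
  obtain ⟨i, h⟩ := hfg.exists_layerSeq_eq_off
  refine ⟨q, hq, hqg, ?_⟩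
  by_cases hpq : p = q
  · exact hpq ▸ .refl
  refine .single ⟨hp, hq, hp.sPathAdjacent_of_getVert_eq_off hq hd hpq (i := i) fun j hj => ?_⟩
  rw [hfp.getVert_eq_layerSeq (hp.2.trans hd), hqg.getVert_eq_layerSeq (hq.2.trans hd), h j hj]

end Reduction

theorem sPath_rerouting_iff_reconfigurable_general
    {V : Type*} [Fintype V] [DecidableEq V]
    (H : SimpleGraph V) (s t : V) (d : ℕ)
    (hd : H.dist s t = d) (hd2 : 2 ≤ d)
    (P₀ Pr : H.Walk s t) (hP₀ : IsSPath H P₀) (hPr : IsSPath H Pr)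
    (f₀ fr : CVert H s t d → V)
    (hf₀ : IsProperListColoring (CGraph H s t d) (CList H s t d) f₀)
    (hfr : IsProperListColoring (CGraph H s t d) (CList H s t d) fr)
    (hf₀P : ∀ u : {i : ℕ // 1 ≤ i ∧ i ≤ d - 1},
      f₀ (Sum.inl u) ∈ P₀.support ∧ f₀ (Sum.inl u) ∈ layerSet H s t d u.1)
    (hfrP : ∀ u : {i : ℕ // 1 ≤ i ∧ i ≤ d - 1},
      fr (Sum.inl u) ∈ Pr.support ∧ fr (Sum.inl u) ∈ layerSet H s t d u.1) :
    Relation.ReflTransGen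
        (fun p q : H.Walk s t => IsSPath H p ∧ IsSPath H q ∧ SPathAdjacent p q) P₀ Pr ↔
      Reconfigurable (CGraph H s t d) (CList H s t d) f₀ fr := by
  have hP₀f₀ := hP₀.encodes_of_mem_support hd hf₀P
  have hPrfr := hPr.encodes_of_mem_support hd hfrP
  constructor
  · intro h
    obtain ⟨g, ⟨-, hg, hPrg⟩, hf₀g⟩ := h.exists_of_simulation
      (R := fun p f => IsSPath H p ∧
        IsProperListColoring (CGraph H s t d) (CList H s t d) f ∧ Encodes p f)
      (fun p q f hpq ⟨_, hf, hfp⟩ =>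
        let ⟨g, hg, hqg, hfg⟩ := SPathStep.exists_reconfigurable hpq hd hf hfp
        ⟨g, ⟨hpq.2.1, hg, hqg⟩, hfg⟩)
      ⟨hP₀, hf₀, hP₀f₀⟩
    exact hf₀g.trans <| reconfigurable_of_eq_on_inl_or_inr hg hfr
      (.inl fun u => (hPrg u).trans (hPrfr u).symm)
  · intro h
    obtain ⟨q, ⟨hq, hqfr⟩, hP₀q⟩ := h.exists_of_simulation
      (R := fun f p => IsSPath H p ∧ Encodes p f)
      (fun f g p hfg ⟨hp, hfp⟩ =>
        let ⟨q, hq, hqg, hpq⟩ := hfg.exists_sPath hp hd (by omega) hfp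
        ⟨q, ⟨hq, hqg⟩, hpq⟩)
      ⟨hP₀, hP₀f₀⟩
    have hqPr : q = Pr := Walk.ext_getVert <| congrFun <| by
      rw [hqfr.getVert_eq_layerSeq (hq.2.trans hd), hPrfr.getVert_eq_layerSeq (hPr.2.trans hd)]
    exact hqPr ▸ hP₀q

/-- Correctness of the reduction: the S-path `P₀` can be transformed into the S-path
`P_r` by a sequence of S-paths in which consecutive ones are adjacent if and only if the
corresponding proper list colorings `f₀` and `f_r` of the constructed instance `(G, L)`
are reconfigurable. -/
theorem sPath_rerouting_iff_reconfigurable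
    {V : Type*} [Fintype V] [DecidableEq V]
    (H : SimpleGraph V) (hconn : H.Connected) (s t : V) (d : ℕ)
    (hd : H.dist s t = d) (hd2 : 2 ≤ d)
    (hlayers : ∀ v : V, ∃ i ≤ d, v ∈ layerSet H s t d i)
    (P₀ Pr : H.Walk s t) (hP₀ : IsSPath H P₀) (hPr : IsSPath H Pr)
    (f₀ fr : CVert H s t d → V)
    (hf₀ : IsProperListColoring (CGraph H s t d) (CList H s t d) f₀)
    (hfr : IsProperListColoring (CGraph H s t d) (CList H s t d) fr)
    (hf₀P : ∀ u : {i : ℕ // 1 ≤ i ∧ i ≤ d - 1},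
      f₀ (Sum.inl u) ∈ P₀.support ∧ f₀ (Sum.inl u) ∈ layerSet H s t d u.1)
    (hfrP : ∀ u : {i : ℕ // 1 ≤ i ∧ i ≤ d - 1},
      fr (Sum.inl u) ∈ Pr.support ∧ fr (Sum.inl u) ∈ layerSet H s t d u.1) :
    Relation.ReflTransGen
        (fun p q : H.Walk s t => IsSPath H p ∧ IsSPath H q ∧ SPathAdjacent p q) P₀ Pr ↔
      Reconfigurable (CGraph H s t d) (CList H s t d) f₀ fr :=
  sPath_rerouting_iff_reconfigurable_general H s t d hd hd2 P₀ Pr hP₀ hPr f₀ fr hf₀ hfr hf₀P hfrP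
end

section
/- Let T be a finite tree with at least two vertices and let X be an independent set of vertices of T. Then the subgraph of T induced on V(T) \ X has exactly 1 + Σ_{x ∈ X} (deg_T(x) − 1) connected components, where deg_T(x) denotes the degree of x in T. -/
/-!
Deleting the independent set `X` from the tree `T` removes `|X|` vertices and, since no edge
joins two vertices of `X`, exactly `∑_{x ∈ X} deg x` edges. What remains is a forest, and a
forest has `|V| - |E|` components (each edge of a forest is a bridge, and deleting a bridge
creates exactly one new component). For `|V| ≥ 2` every degree is positive, so
`(|V| - |X|) - (|V| - 1 - ∑ deg x) = 1 + ∑ (deg x - 1)`.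
-/

open Finset

namespace SimpleGraph

variable {V : Type*} {G : SimpleGraph V} {x y : V}

lemma Walk.reachable_deleteEdges_or_reachable_ends {w z : V} (p : G.Walk w z) :
    (G.deleteEdges {s(x, y)}).Reachable w z ∨
      ((G.deleteEdges {s(x, y)}).Reachable w x ∨ (G.deleteEdges {s(x, y)}).Reachable w y) ∧
        ((G.deleteEdges {s(x, y)}).Reachable z x ∨ (G.deleteEdges {s(x, y)}).Reachable z y) := by
  induction p with
  | nil => exact .inl .rfl
  | @cons a b z hab q ih =>
    by_cases he : s(a, b) = s(x, y)
    · have endpoint {v} (hv : v ∈ s(x, y)) :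
          (G.deleteEdges {s(x, y)}).Reachable v x ∨ (G.deleteEdges {s(x, y)}).Reachable v y := by
        rcases Sym2.mem_iff.mp hv with rfl | rfl <;> simp
      refine .inr ⟨endpoint (he ▸ Sym2.mem_mk_left a b), ?_⟩
      have hb := endpoint (he ▸ Sym2.mem_mk_right a b)
      exact ih.elim (fun h ↦ hb.imp h.symm.trans h.symm.trans) And.right
    · have hab' : (G.deleteEdges {s(x, y)}).Adj a b := by simpa [he] using hab
      rcases ih with h | ⟨h, hz⟩
      · exact .inl (hab'.reachable.trans h)
      · exact .inr ⟨h.imp hab'.reachable.trans hab'.reachable.trans, hz⟩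

theorem IsBridge.card_connectedComponent_deleteEdges [Finite V] (hadj : G.Adj x y)
    (hbr : G.IsBridge s(x, y)) :
    Nat.card (G.deleteEdges {s(x, y)}).ConnectedComponent = Nat.card G.ConnectedComponent + 1 := by
  set H := G.deleteEdges {s(x, y)}
  let φ := ConnectedComponent.map (Hom.ofLE (deleteEdges_le {s(x, y)} : H ≤ G))
  have hxy : H.connectedComponentMk x ≠ H.connectedComponentMk y :=
    fun h ↦ isBridge_iff.mp hbr (ConnectedComponent.exact h)
  -- Components of `G` are those of `G - xy`, except that the components of `x` and `y` merge.
  have hinj : Set.InjOn φ {H.connectedComponentMk y}ᶜ := by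
    intro C hC D hD hCD
    induction C using ConnectedComponent.ind with | h w => ?_
    induction D using ConnectedComponent.ind with | h z => ?_
    obtain ⟨p⟩ := ConnectedComponent.exact hCD
    rcases p.reachable_deleteEdges_or_reachable_ends (x := x) (y := y) with
      h | ⟨hw | hw, hz | hz⟩
    · exact ConnectedComponent.sound h
    · exact ConnectedComponent.sound (hw.trans hz.symm)
    · exact absurd (ConnectedComponent.sound hz) hD
    · exact absurd (ConnectedComponent.sound hw) hC
    · exact absurd (ConnectedComponent.sound hw) hC
  have himage : φ '' {H.connectedComponentMk y}ᶜ = Set.univ := by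
    refine Set.eq_univ_of_forall fun C ↦ ?_
    obtain ⟨D, rfl⟩ := ConnectedComponent.surjective_map_ofLE (deleteEdges_le {s(x, y)}) C
    by_cases hD : D = H.connectedComponentMk y
    · refine ⟨H.connectedComponentMk x, hxy, ?_⟩
      rw [hD]
      exact ConnectedComponent.sound hadj.reachable
    · exact ⟨D, hD, rfl⟩
  have := Set.ncard_add_ncard_compl {H.connectedComponentMk y}
  rw [Set.ncard_singleton, ← hinj.ncard_image, himage, Set.ncard_univ] at this
  omega

theorem card_connectedComponent_bot :
    Nat.card (⊥ : SimpleGraph V).ConnectedComponent = Nat.card V :=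
  (Nat.card_eq_of_bijective _ ⟨fun _ _ h ↦ reachable_bot.mp (ConnectedComponent.exact h),
    fun C ↦ C.exists_rep⟩).symm

theorem IsAcyclic.card_connectedComponent_add_card_edgeSet [Finite V] (hG : G.IsAcyclic) :
    Nat.card G.ConnectedComponent + Nat.card G.edgeSet = Nat.card V := by
  induction hn : Nat.card G.edgeSet generalizing G with
  | zero =>
    have : G = ⊥ := by
      rw [← edgeSet_eq_empty, ← Set.ncard_eq_zero]
      exact hn
    subst this
    simp [card_connectedComponent_bot]
  | succ n ih =>
    obtain ⟨⟨e, he⟩⟩ : Nonempty G.edgeSet := (Nat.card_pos_iff.mp (by omega)).1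
    induction e using Sym2.ind with | h x y => ?_
    have hH : (G.deleteEdges {s(x, y)}).IsAcyclic := hG.anti (deleteEdges_le _)
    have hcard : Nat.card (G.deleteEdges {s(x, y)}).edgeSet = n := by
      rw [Nat.card_coe_set_eq, edgeSet_deleteEdges, Set.ncard_sdiff_singleton_of_mem he,
        ← Nat.card_coe_set_eq, hn, Nat.add_sub_cancel]
    have hbridge := isAcyclic_iff_forall_adj_isBridge.mp hG he
    have := ih hH hcard
    rw [hbridge.card_connectedComponent_deleteEdges he] at this
    omega

theorem IsIndepSet.card_edgeSet_induce_compl_add_sum_degree [Fintype V] [DecidableRel G.Adj]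
    {X : Finset V} (hX : G.IsIndepSet X) :
    Nat.card (G.induce (↑X)ᶜ).edgeSet + ∑ x ∈ X, G.degree x = Nat.card G.edgeSet := by
  classical
  have hdeg : ∑ x ∈ X, G.degree x = #(X.biUnion (G.incidenceFinset ·)) := by
    rw [card_biUnion]
    · exact sum_congr rfl fun x _ ↦ (G.card_incidenceFinset_eq_degree x).symm
    · intro a ha b hb hab
      refine Finset.disjoint_left.mpr fun e hea heb ↦ ?_
      have hempty := G.incidenceSet_inter_incidenceSet_of_not_adj (hX ha hb hab) hab
      exact hempty.subset ⟨(G.mem_incidenceFinset a e).mp hea, (G.mem_incidenceFinset b e).mp heb⟩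
  have hinduce :
      Nat.card (G.induce (↑X)ᶜ).edgeSet = #(G.edgeFinset ∩ (↑X : Set V)ᶜ.toFinset.sym2) := by
    rw [← map_edgeFinset_induce, card_map, Nat.card_eq_fintype_card, edgeFinset_card]
  have hsplit :
      G.edgeFinset \ (↑X : Set V)ᶜ.toFinset.sym2 = X.biUnion (G.incidenceFinset ·) := by
    ext e
    simp only [mem_sdiff, mem_edgeFinset, mem_sym2_iff, Set.mem_toFinset, Set.mem_compl_iff,
      mem_coe, not_forall, not_not, mem_biUnion, mem_incidenceFinset, incidenceSet,
      Set.mem_ofPred_eq]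
    tauto
  rw [hinduce, hdeg, ← hsplit, card_inter_add_card_sdiff, Nat.card_eq_fintype_card,
    edgeFinset_card]

end SimpleGraph

open SimpleGraph Finset

theorem card_components_tree_delete_independent_set_general
    {V : Type*} [Fintype V]
    (T : SimpleGraph V) [DecidableRel T.Adj] (hT : T.IsTree)
    (hcard : 2 ≤ Fintype.card V)
    (X : Finset V) (hX : ∀ u ∈ X, ∀ v ∈ X, ¬ T.Adj u v) :
    Nat.card (T.induce {v : V | v ∉ X}).ConnectedComponent
      = 1 + ∑ x ∈ X, (T.degree x - 1) := by
  have : Nontrivial V := Fintype.one_lt_card_iff_nontrivial.mp hcard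
  have hforest := (hT.isAcyclic.induce {v : V | v ∉ X}).card_connectedComponent_add_card_edgeSet
  have hedges : Nat.card (T.induce {v : V | v ∉ X}).edgeSet + ∑ x ∈ X, T.degree x =
      Nat.card T.edgeSet :=
    IsIndepSet.card_edgeSet_induce_compl_add_sum_degree fun u hu v hv _ ↦ hX u hu v hv
  have htree := (isTree_iff_connected_and_card.mp hT).2
  have hcompl : Nat.card {v : V | v ∉ X} + #X = Nat.card V := by
    rw [Nat.card_coe_set_eq, ← Set.ncard_coe_finset]
    exact Set.ncard_compl_add_ncard _
  have hdeg : ∑ x ∈ X, (T.degree x - 1) + #X = ∑ x ∈ X, T.degree x := by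
    rw [card_eq_sum_ones, ← sum_add_distrib]
    exact sum_congr rfl fun x _ ↦
      Nat.sub_add_cancel (hT.connected.preconnected.degree_pos_of_nontrivial x)
  omega

/-- Deleting an independent set `X` from a tree `T` with at least two vertices leaves
exactly `1 + ∑_{x ∈ X} (deg_T(x) - 1)` connected components. -/
theorem card_components_tree_delete_independent_set
    {V : Type*} [Fintype V] [DecidableEq V]
    (T : SimpleGraph V) [DecidableRel T.Adj] (hT : T.IsTree)
    (hcard : 2 ≤ Fintype.card V)
    (X : Finset V) (hX : ∀ u ∈ X, ∀ v ∈ X, ¬ T.Adj u v) :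
    Nat.card (T.induce {v : V | v ∉ X}).ConnectedComponent
      = 1 + ∑ x ∈ X, (T.degree x - 1) :=
  card_components_tree_delete_independent_set_general T hT hcard X hX
end

section
/- Let G be a finite connected simple graph with n ≥ 2 vertices, let ℓ be a proper coloring of G (a function on V(G) assigning different values to adjacent vertices), and let S be a finite set of colors. For each c ∈ S, let G_c denote the subgraph of G induced on V(G) \ ℓ^{-1}(c). Then Σ_{c ∈ S} comp(G_c) ≤ |S| + n − 2, where comp denotes the number of connected components. -/
/-- Let `G` be a connected graph on `n ≥ 2` vertices, `ℓ` a proper coloring of `G`, and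
`S` a finite set of colors. Summing, over the colors `c ∈ S`, the number of connected
components of the subgraph induced on the vertices not colored `c`, gives at most
`|S| + n - 2`. -/
theorem sum_card_components_delete_color_classes_le
    {V C : Type*} [Fintype V]
    (G : SimpleGraph V) (hG : G.Connected) (hcard : 2 ≤ Fintype.card V)
    (ℓ : V → C) (hℓ : ∀ u v : V, G.Adj u v → ℓ u ≠ ℓ v) (S : Finset C) :
    ∑ c ∈ S, Nat.card (G.induce {v : V | ℓ v ≠ c}).ConnectedComponent
      ≤ S.card + Fintype.card V - 2 := by
  classical
  -- pick a root `r` and a neighbor `a` of `r`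
  have hne : Nonempty V := Fintype.card_pos_iff.mp (by omega)
  obtain ⟨r⟩ := hne
  obtain ⟨v, hvr⟩ := Fintype.exists_ne_of_one_lt_card (by omega) r
  obtain ⟨p⟩ := hG r v
  obtain ⟨a, hra, -, -⟩ := p.exists_eq_cons_of_ne (Ne.symm hvr)
  -- distance to the root
  set d : V → ℕ := fun v => G.dist r v with hd
  -- the sets `B c`
  set B : C → Finset V := fun c => Finset.univ.filter
    (fun v => v ≠ a ∧ (∀ w, G.Adj v w → d w < d v → ℓ w = c) ∧ ∃ w, G.Adj v w ∧ d w < d v)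
    with hB
  have hmemB : ∀ c v, v ∈ B c ↔
      v ≠ a ∧ (∀ w, G.Adj v w → d w < d v → ℓ w = c) ∧ ∃ w, G.Adj v w ∧ d w < d v := by
    intro c v; simp [hB]
  -- each `B c` avoids `r` and `a`
  have hBsub : ∀ c, B c ⊆ Finset.univ \ {r, a} := by
    intro c v hv
    rw [hmemB] at hv
    obtain ⟨hva, -, w, hadj, hw⟩ := hv
    have hvr : v ≠ r := by
      rintro rfl
      simp [hd, SimpleGraph.dist_self] at hw
    simp [hvr, hva]
  -- the `B c` are pairwise disjoint
  have hBdisj : ∀ c ∈ S, ∀ c' ∈ S, c ≠ c' → Disjoint (B c) (B c') := by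
    intro c _ c' _ hcc'
    rw [Finset.disjoint_left]
    intro v hv hv'
    rw [hmemB] at hv hv'
    obtain ⟨-, hall, w, hadj, hw⟩ := hv
    obtain ⟨-, hall', -⟩ := hv'
    exact hcc' ((hall w hadj hw).symm.trans (hall' w hadj hw))
  -- key estimate, one color at a time
  have key : ∀ c, Nat.card (G.induce {v : V | ℓ v ≠ c}).ConnectedComponent
      ≤ 1 + (B c).card := by
    intro c
    set X : Set V := {v : V | ℓ v ≠ c} with hX
    set H : SimpleGraph X := G.induce X with hH
    -- the distinguished vertex `x`
    set x : V := if ℓ r = c then a else r with hxdef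
    have hx : ℓ x ≠ c := by
      rw [hxdef]
      split
      · rename_i h
        intro hc
        exact hℓ r a hra (h.trans hc.symm)
      · assumption
    set x' : X := ⟨x, hx⟩ with hx'
    set K₀ : H.ConnectedComponent := H.connectedComponentMk x' with hK₀
    -- every component other than `K₀` contains a vertex of `B c`
    have main : ∀ K : H.ConnectedComponent, K ≠ K₀ →
        ∃ v : X, (v : V) ∈ B c ∧ H.connectedComponentMk v = K := by
      intro K hK
      obtain ⟨u, hu⟩ := K.exists_rep
      set s : Finset X := Finset.univ.filter (fun v => H.connectedComponentMk v = K) with hs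
      have hsne : s.Nonempty := ⟨u, by simp only [hs, Finset.mem_filter, Finset.mem_univ, true_and]; exact hu⟩
      obtain ⟨v₀, hv₀s, hmin⟩ := s.exists_min_image (fun v => d (v : V)) hsne
      have hv₀K : H.connectedComponentMk v₀ = K := by
        simpa [hs] using hv₀s
      refine ⟨v₀, ?_, hv₀K⟩
      -- `v₀ ≠ r`
      have hv₀r : (v₀ : V) ≠ r := by
        intro h
        have hrc : ℓ r ≠ c := h ▸ v₀.2
        have hxr : x = r := by rw [hxdef, if_neg hrc]
        apply hK
        rw [← hv₀K, hK₀]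
        congr 1
        rw [hx']
        exact Subtype.ext (h.trans hxr.symm)
      have hdpos : 0 < d (v₀ : V) := hG.pos_dist_of_ne (Ne.symm hv₀r)
      -- `v₀` has a neighbor closer to `r`
      have hdown : ∃ w, G.Adj (v₀ : V) w ∧ d w < d (v₀ : V) := by
        obtain ⟨p, hp⟩ := hG.exists_walk_length_eq_dist r (v₀ : V)
        obtain ⟨w, hadj, q, hq⟩ := p.reverse.exists_eq_cons_of_ne hv₀r
        refine ⟨w, hadj, ?_⟩
        have hlen : q.length + 1 = p.length := by
          have := p.length_reverse
          rw [hq] at this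
          simpa using this
        have : G.dist r w ≤ q.reverse.length := SimpleGraph.dist_le q.reverse
        rw [q.length_reverse] at this
        calc d w ≤ q.length := this
          _ < p.length := by omega
          _ = d (v₀ : V) := hp
      -- every neighbor of `v₀` closer to `r` is colored `c`
      have hall : ∀ w, G.Adj (v₀ : V) w → d w < d (v₀ : V) → ℓ w = c := by
        intro w hadj hw
        by_contra hwc
        have hwX : w ∈ X := hwc
        have hHadj : H.Adj v₀ ⟨w, hwX⟩ := by
          simp [hH, SimpleGraph.comap_adj, hadj]
        have : H.connectedComponentMk ⟨w, hwX⟩ = K := by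
          rw [← hv₀K]
          exact SimpleGraph.ConnectedComponent.sound hHadj.symm.reachable
        have hws : (⟨w, hwX⟩ : X) ∈ s := by simp [hs, this]
        have hge := hmin _ hws
        simp only [Subtype.coe_mk] at hge
        exact absurd hw (by omega)
      -- `v₀ ≠ a`
      have hv₀a : (v₀ : V) ≠ a := by
        intro h
        have hradj : G.Adj (v₀ : V) r := h ▸ hra.symm
        have hdr : d r < d (v₀ : V) := by
          simpa [hd, SimpleGraph.dist_self] using hdpos
        have hrc : ℓ r = c := hall r hradj hdr
        have hxa : x = a := by rw [hxdef, if_pos hrc]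
        apply hK
        rw [← hv₀K, hK₀]
        congr 1
        rw [hx']
        exact Subtype.ext (h.trans hxa.symm)
      rw [hmemB]
      exact ⟨hv₀a, hall, hdown⟩
    -- build the injection into `Option (B c)`
    have : Nat.card H.ConnectedComponent ≤ Nat.card (Option (B c)) := by
      have hchoice : ∀ K : H.ConnectedComponent, K ≠ K₀ →
          { v : X // (v : V) ∈ B c ∧ H.connectedComponentMk v = K } := by
        intro K hK
        exact ⟨(main K hK).choose, (main K hK).choose_spec⟩
      set f : H.ConnectedComponent → Option (B c) := fun K =>
        if hK : K = K₀ then none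
        else some ⟨((hchoice K hK) : { v : X // (v : V) ∈ B c ∧ _ }).1,
          (hchoice K hK).2.1⟩ with hf
      apply Nat.card_le_card_of_injective f
      intro K K' hKK'
      rw [hf] at hKK'
      by_cases h1 : K = K₀ <;> by_cases h2 : K' = K₀
      · rw [h1, h2]
      · simp [h1, h2] at hKK'
      · simp [h1, h2] at hKK'
      · simp only [dif_neg h1, dif_neg h2, Option.some.injEq, Subtype.mk.injEq] at hKK'
        have he : ((hchoice K h1).1 : X) = ((hchoice K' h2).1 : X) := Subtype.ext hKK'
        rw [← (hchoice K h1).2.2, ← (hchoice K' h2).2.2, he]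
    calc Nat.card H.ConnectedComponent ≤ Nat.card (Option (B c)) := this
      _ = Nat.card (B c) + 1 := by
          rw [Nat.card_eq_fintype_card, Nat.card_eq_fintype_card, Fintype.card_option]
      _ = (B c).card + 1 := by rw [Nat.card_eq_fintype_card, Fintype.card_coe]
      _ = 1 + (B c).card := by omega
  -- assemble
  have hsum : ∑ c ∈ S, (B c).card ≤ Fintype.card V - 2 := by
    rw [← Finset.card_biUnion hBdisj]
    have hsub : S.biUnion B ⊆ Finset.univ \ {r, a} :=
      Finset.biUnion_subset.mpr fun c _ => hBsub c
    have h2 : (Finset.univ \ ({r, a} : Finset V)).card = Fintype.card V - 2 := by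
      rw [Finset.card_sdiff_of_subset (Finset.subset_univ _), Finset.card_univ]
      congr 1
      rw [Finset.card_insert_of_notMem (by simp [hra.ne]), Finset.card_singleton]
    rw [← h2]
    exact Finset.card_le_card hsub
  calc ∑ c ∈ S, Nat.card (G.induce {v : V | ℓ v ≠ c}).ConnectedComponent
      ≤ ∑ c ∈ S, (1 + (B c).card) := Finset.sum_le_sum fun c _ => key c
    _ = S.card + ∑ c ∈ S, (B c).card := by
        rw [Finset.sum_add_distrib, Finset.sum_const, smul_eq_mul, mul_one]
    _ ≤ S.card + (Fintype.card V - 2) := by omega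
    _ = S.card + Fintype.card V - 2 := by omega
end
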